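/- Let (Ω, ρ) be a finite measure space with ρ(Ω) > 0, let 𝒳 be a measurable space, let ℓ : Ω × 𝒳 → [0,1] be measurable, let β > 0, and let H(ω, x) = (1/n) Σ_{i=1}ⁿ ℓ(ω, x_i). Define the free energy Λ : 𝒳ⁿ → ℝ by Λ(x) = ln ∫_Ω e^{−β·H(ω,x)} dρ(ω). Then M(Λ) ≤ β/n and J(Λ) ≤ 2β²/n; that is, Λ has (β, 2β²)-weak interactions. -/

import Mathlib

/-!
Write the free energy as `log ∫ exp (∑ i, V ω (x i)) dρ` with `V = -(β/n) ℓ`. Changing the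
`k`-th coordinate multiplies the integrand by `exp φ` with `φ ≤ β/n`, which bounds `M`.
Changing two coordinates `k ≠ l` multiplies it by `exp φ`, `exp ψ`, so with
`I_ab = ∫ exp (g + a φ + b ψ) dρ` the mixed difference is `log (I₁₁ I₀₀ / (I₁₀ I₀₁))`. Symmetrized over `ρ ⊗ ρ`, `2 I₁₁ I₀₀` and `2 I₁₀ I₀₁` integrate
`e^(g+g') (e^(φ+ψ) + e^(φ'+ψ'))` and `e^(g+g') (e^(φ+ψ') + e^(φ'+ψ))`, whose ratio is pointwise
at most `cosh (2β/n)` because `φ, ψ` oscillate by at most `2β/n`; finally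
`log (cosh t) ≤ t² / 2`.
-/

open MeasureTheory ProbabilityTheory

/-- Partial difference operator `D^k_{y,y'} f (x)`. -/
noncomputable def partialDiff {𝒳 : Type*} {n : ℕ} (f : (Fin n → 𝒳) → ℝ) (k : Fin n)
    (y y' : 𝒳) (x : Fin n → 𝒳) : ℝ :=
  f (Function.update x k y) - f (Function.update x k y')

/-- The seminorm `M(f) = max_k sup_{x,y,y'} D^k_{y,y'} f(x)`. -/
noncomputable def Msem {𝒳 : Type*} {n : ℕ} (f : (Fin n → 𝒳) → ℝ) : ℝ :=
  ⨆ k : Fin n, ⨆ x : Fin n → 𝒳, ⨆ y : 𝒳, ⨆ y' : 𝒳, partialDiff f k y y' x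

/-- The seminorm `J(f) = n · max_{l ≠ k} sup_{x,z,z',y,y'} D^l_{z,z'} D^k_{y,y'} f(x)`. -/
noncomputable def Jsem {𝒳 : Type*} {n : ℕ} (f : (Fin n → 𝒳) → ℝ) : ℝ :=
  n * ⨆ k : Fin n, ⨆ l : Fin n, ⨆ _ : l ≠ k, ⨆ x : Fin n → 𝒳, ⨆ z : 𝒳, ⨆ z' : 𝒳,
      ⨆ y : 𝒳, ⨆ y' : 𝒳, partialDiff (partialDiff f k y y') l z z' x

open Real

theorem sum_update_eq_sum_update_add_sub {ι α M : Type*} [Fintype ι] [DecidableEq ι]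
    [AddCommGroup M] (f : α → M) (x : ι → α) (k : ι) (y y' : α) :
    ∑ i, f (Function.update x k y i) = ∑ i, f (Function.update x k y' i) + (f y - f y') := by
  have h v : ∑ i, f (Function.update x k v i) = f v + ∑ i ∈ Finset.univ \ {k}, f (x i) := by
    have := Finset.sum_update_of_mem (Finset.mem_univ k) (f ∘ x) (f v)
    rwa [← Function.comp_update] at this
  rw [h, h]
  abel

theorem exp_add_add_exp_add_le_cosh_mul {φ φ' ψ ψ' d : ℝ} (hφ : |φ - φ'| ≤ d)
    (hψ : |ψ - ψ'| ≤ d) :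
    exp (φ + ψ) + exp (φ' + ψ') ≤ cosh d * (exp (φ + ψ') + exp (φ' + ψ)) := by
  obtain ⟨hφ₁, hφ₂⟩ := abs_sub_le_iff.mp hφ
  obtain ⟨hψ₁, hψ₂⟩ := abs_sub_le_iff.mp hψ
  have ratio {u v : ℝ} (h : u - v ≤ d) : exp u ≤ exp d * exp v := by
    rw [← exp_add]; exact exp_le_exp.mpr (by linarith)
  rw [cosh_eq, exp_neg, exp_add, exp_add, exp_add, exp_add, ← sub_nonneg]
  have key := add_nonneg
    (mul_nonneg (sub_nonneg.mpr (ratio hφ₁)) (sub_nonneg.mpr (ratio hψ₂)))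
    (mul_nonneg (sub_nonneg.mpr (ratio hψ₁)) (sub_nonneg.mpr (ratio hφ₂)))
  have gap : (exp d + (exp d)⁻¹) / 2 * (exp φ * exp ψ' + exp φ' * exp ψ)
      - (exp φ * exp ψ + exp φ' * exp ψ') =
      (exp d)⁻¹ / 2 * ((exp d * exp φ' - exp φ) * (exp d * exp ψ - exp ψ')
        + (exp d * exp ψ' - exp ψ) * (exp d * exp φ - exp φ')) := by
    field_simp
    ring
  rw [gap]
  exact mul_nonneg (by positivity) key

section LogIntegralExp

variable {Ω : Type*} [MeasurableSpace Ω] {ρ : Measure Ω} {g φ ψ : Ω → ℝ}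

theorem log_integral_exp_add_sub_le [NeZero ρ] {c : ℝ} (hφ : ∀ ω, φ ω ≤ c)
    (hg : Integrable (fun ω => exp (g ω)) ρ) (hgφ : Integrable (fun ω => exp (g ω + φ ω)) ρ) :
    log (∫ ω, exp (g ω + φ ω) ∂ρ) - log (∫ ω, exp (g ω) ∂ρ) ≤ c := by
  have hmono : ∫ ω, exp (g ω + φ ω) ∂ρ ≤ exp c * ∫ ω, exp (g ω) ∂ρ := by
    rw [← integral_const_mul]
    refine integral_mono hgφ (hg.const_mul _) fun ω => ?_
    rw [← exp_add]
    exact exp_le_exp.mpr (by linarith [hφ ω])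
  have := log_le_log (integral_exp_pos hgφ) hmono
  rw [log_mul (exp_ne_zero c) (integral_exp_pos hg).ne', log_exp] at this
  linarith

theorem integral_exp_mul_integral_exp_add_add_le [SFinite ρ] {d : ℝ}
    (hφ : ∀ ω ω', |φ ω - φ ω'| ≤ d) (hψ : ∀ ω ω', |ψ ω - ψ ω'| ≤ d)
    (hg : Integrable (fun ω => exp (g ω)) ρ) (hgφ : Integrable (fun ω => exp (g ω + φ ω)) ρ)
    (hgψ : Integrable (fun ω => exp (g ω + ψ ω)) ρ)
    (hgφψ : Integrable (fun ω => exp (g ω + φ ω + ψ ω)) ρ) :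
    (∫ ω, exp (g ω) ∂ρ) * ∫ ω, exp (g ω + φ ω + ψ ω) ∂ρ ≤
      cosh d * ((∫ ω, exp (g ω + φ ω) ∂ρ) * ∫ ω, exp (g ω + ψ ω) ∂ρ) := by
  have hsymm {F G : Ω → ℝ} (hF : Integrable F ρ) (hG : Integrable G ρ) :
      ∫ z, (F z.1 * G z.2 + G z.1 * F z.2) ∂ρ.prod ρ = 2 * ((∫ ω, F ω ∂ρ) * ∫ ω, G ω ∂ρ) := by
    rw [integral_add (hF.mul_prod hG) (hG.mul_prod hF), integral_prod_mul, integral_prod_mul]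
    ring
  have hpt (z : Ω × Ω) :
      exp (g z.1 + φ z.1 + ψ z.1) * exp (g z.2) + exp (g z.1) * exp (g z.2 + φ z.2 + ψ z.2) ≤
        cosh d * (exp (g z.1 + φ z.1) * exp (g z.2 + ψ z.2)
          + exp (g z.1 + ψ z.1) * exp (g z.2 + φ z.2)) := by
    calc _ = exp (g z.1 + g z.2) * (exp (φ z.1 + ψ z.1) + exp (φ z.2 + ψ z.2)) := by
          simp only [exp_add]; ring
      _ ≤ exp (g z.1 + g z.2) * (cosh d * (exp (φ z.1 + ψ z.2) + exp (φ z.2 + ψ z.1))) :=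
          mul_le_mul_of_nonneg_left
            (exp_add_add_exp_add_le_cosh_mul (hφ z.1 z.2) (hψ z.1 z.2)) (exp_pos _).le
      _ = _ := by simp only [exp_add]; ring
  have := integral_mono ((hgφψ.mul_prod hg).add (hg.mul_prod hgφψ))
    (((hgφ.mul_prod hgψ).add (hgψ.mul_prod hgφ)).const_mul _) hpt
  simp only [Pi.add_apply] at this
  rw [integral_const_mul, hsymm hgφψ hg, hsymm hgφ hgψ] at this
  linarith

theorem log_integral_exp_mixed_sub_le [SFinite ρ] [NeZero ρ] {d : ℝ}
    (hφ : ∀ ω ω', |φ ω - φ ω'| ≤ d) (hψ : ∀ ω ω', |ψ ω - ψ ω'| ≤ d)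
    (hg : Integrable (fun ω => exp (g ω)) ρ) (hgφ : Integrable (fun ω => exp (g ω + φ ω)) ρ)
    (hgψ : Integrable (fun ω => exp (g ω + ψ ω)) ρ)
    (hgφψ : Integrable (fun ω => exp (g ω + φ ω + ψ ω)) ρ) :
    log (∫ ω, exp (g ω + φ ω + ψ ω) ∂ρ) - log (∫ ω, exp (g ω + ψ ω) ∂ρ)
      - (log (∫ ω, exp (g ω + φ ω) ∂ρ) - log (∫ ω, exp (g ω) ∂ρ)) ≤ d ^ 2 / 2 := by
  have h₀ := integral_exp_pos hg
  have hφ₀ := integral_exp_pos hgφ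
  have hψ₀ := integral_exp_pos hgψ
  have hφψ₀ := integral_exp_pos hgφψ
  have hcosh : log (cosh d) ≤ d ^ 2 / 2 := by
    rw [log_le_iff_le_exp (cosh_pos d)]
    exact cosh_le_exp_half_sq d
  have := log_le_log (by positivity)
    (integral_exp_mul_integral_exp_add_add_le hφ hψ hg hgφ hgψ hgφψ)
  rw [log_mul h₀.ne' hφψ₀.ne', log_mul (cosh_pos d).ne' (by positivity),
    log_mul hφ₀.ne' hψ₀.ne'] at this
  linarith

end LogIntegralExp

section LogPartition

variable {Ω 𝒳 : Type*} [MeasurableSpace Ω] {ρ : Measure Ω} {n : ℕ}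

noncomputable def logPartition {ι : Type*} [Fintype ι] (ρ : Measure Ω) (V : Ω → 𝒳 → ℝ)
    (x : ι → 𝒳) : ℝ :=
  log (∫ ω, exp (∑ i, V ω (x i)) ∂ρ)

theorem Msem_le {f : (Fin n → 𝒳) → ℝ} {c : ℝ} (hc : 0 ≤ c)
    (h : ∀ k x y y', partialDiff f k y y' x ≤ c) : Msem f ≤ c :=
  Real.iSup_le (fun k => Real.iSup_le (fun x => Real.iSup_le (fun y =>
    Real.iSup_le (h k x y) hc) hc) hc) hc

theorem Jsem_le {f : (Fin n → 𝒳) → ℝ} {b : ℝ} (hb : 0 ≤ b)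
    (h : ∀ k l, l ≠ k → ∀ x z z' y y', partialDiff (partialDiff f k y y') l z z' x ≤ b) :
    Jsem f ≤ n * b :=
  mul_le_mul_of_nonneg_left
    (Real.iSup_le (fun k => Real.iSup_le (fun l => Real.iSup_le (fun hlk =>
      Real.iSup_le (fun x => Real.iSup_le (fun z => Real.iSup_le (fun z' =>
        Real.iSup_le (fun y => Real.iSup_le (h k l hlk x z z' y) hb) hb) hb) hb) hb) hb) hb) hb)
    n.cast_nonneg

variable {V : Ω → 𝒳 → ℝ} {c : ℝ}

theorem Msem_logPartition_le [NeZero ρ] (hc : 0 ≤ c) (hV : ∀ ω y y', V ω y - V ω y' ≤ c)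
    (hint : ∀ x : Fin n → 𝒳, Integrable (fun ω => exp (∑ i, V ω (x i))) ρ) :
    Msem (logPartition (ι := Fin n) ρ V) ≤ c := by
  refine Msem_le hc fun k x y y' => ?_
  have hsum ω := sum_update_eq_sum_update_add_sub (V ω) x k y y'
  have hint_y := hint (Function.update x k y)
  simp only [hsum] at hint_y
  simp only [partialDiff, logPartition, hsum]
  exact log_integral_exp_add_sub_le (fun ω => hV ω y y') (hint _) hint_y

theorem Jsem_logPartition_le [SFinite ρ] [NeZero ρ] (hV : ∀ ω y y', V ω y - V ω y' ≤ c)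
    (hint : ∀ x : Fin n → 𝒳, Integrable (fun ω => exp (∑ i, V ω (x i))) ρ) :
    Jsem (logPartition (ι := Fin n) ρ V) ≤ n * (2 * c ^ 2) := by
  refine Jsem_le (by positivity) fun k l hlk x z z' y y' => ?_
  have hsum ω a b : ∑ i, V ω (Function.update (Function.update x l a) k b i) =
      ∑ i, V ω (Function.update (Function.update x l z') k y' i)
        + (V ω b - V ω y') + (V ω a - V ω z') := by
    rw [sum_update_eq_sum_update_add_sub (V ω) _ k b y', Function.update_comm hlk a y' x,
      sum_update_eq_sum_update_add_sub (V ω) _ l a z', ← Function.update_comm hlk z' y' x]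
    abel
  have hosc (a b : 𝒳) (ω ω' : Ω) : |(V ω a - V ω b) - (V ω' a - V ω' b)| ≤ 2 * c := by
    rw [abs_le]
    constructor <;> linarith [hV ω a b, hV ω b a, hV ω' a b, hV ω' b a]
  have h₁₁ := hint (Function.update (Function.update x l z) k y)
  have h₁₀ := hint (Function.update (Function.update x l z') k y)
  have h₀₁ := hint (Function.update (Function.update x l z) k y')
  simp only [hsum _ z y, hsum _ z' y, hsum _ z y', sub_self, add_zero] at h₁₁ h₁₀ h₀₁
  simp only [partialDiff, logPartition, hsum _ z y, hsum _ z' y, hsum _ z y', sub_self, add_zero]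
  calc _ ≤ (2 * c) ^ 2 / 2 :=
        log_integral_exp_mixed_sub_le (hosc y y') (hosc z z') (hint _) h₁₀ h₀₁ h₁₁
    _ = 2 * c ^ 2 := by ring

end LogPartition

theorem free_energy_weak_interactions_general {Ω 𝒳 : Type*} [MeasurableSpace Ω] [MeasurableSpace 𝒳]
    {n : ℕ} (ρ : Measure Ω) [IsFiniteMeasure ρ] (hρ : ρ ≠ 0)
    (ℓ : Ω → 𝒳 → ℝ) (hℓmeas : Measurable (Function.uncurry ℓ))
    (hℓbd : ∀ ω x, ℓ ω x ∈ Set.Icc (0 : ℝ) 1) (β : ℝ) (hβ : 0 < β) :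
    Msem (fun x : Fin n → 𝒳 =>
        Real.log (∫ ω, Real.exp (-β * ((1 / (n : ℝ)) * ∑ i, ℓ ω (x i))) ∂ρ)) ≤ β / n ∧
      Jsem (fun x : Fin n → 𝒳 =>
        Real.log (∫ ω, Real.exp (-β * ((1 / (n : ℝ)) * ∑ i, ℓ ω (x i))) ∂ρ)) ≤
        2 * β ^ 2 / n := by
  have : NeZero ρ := ⟨hρ⟩
  set V : Ω → 𝒳 → ℝ := fun ω y => -(β / n) * ℓ ω y
  have hΛ : (fun x : Fin n → 𝒳 =>
      log (∫ ω, exp (-β * ((1 / (n : ℝ)) * ∑ i, ℓ ω (x i))) ∂ρ)) = logPartition ρ V := by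
    funext x
    refine congrArg log (integral_congr_ae (ae_of_all _ fun ω => ?_))
    simp only [V, Finset.mul_sum]
    exact congrArg exp (Finset.sum_congr rfl fun i _ => by ring)
  have hc : 0 ≤ β / n := by positivity
  have hV ω y y' : V ω y - V ω y' ≤ β / n := by
    calc V ω y - V ω y' = β / n * (ℓ ω y' - ℓ ω y) := by ring
      _ ≤ β / n * 1 := by gcongr; linarith [(hℓbd ω y).1, (hℓbd ω y').2]
      _ = β / n := mul_one _
  have hint (x : Fin n → 𝒳) : Integrable (fun ω => exp (∑ i, V ω (x i))) ρ := by
    refine Integrable.of_bound (Finset.measurable_sum _ fun i _ =>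
      hℓmeas.of_uncurry_right.const_mul _).exp.aestronglyMeasurable 1 (ae_of_all _ fun ω => ?_)
    rw [norm_of_nonneg (exp_pos _).le, exp_le_one_iff]
    exact Finset.sum_nonpos fun i _ => mul_nonpos_of_nonpos_of_nonneg (by linarith)
      (hℓbd ω (x i)).1
  rw [hΛ]
  refine ⟨Msem_logPartition_le hc hV hint, ?_⟩
  calc _ ≤ n * (2 * (β / n) ^ 2) := Jsem_logPartition_le hV hint
    _ = 2 * β ^ 2 / n := by
      rcases eq_or_ne (n : ℝ) 0 with h | h
      · simp [h]
      · field_simp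

/-- The free energy `Λ(x) = ln ∫ e^{−β H(ω,x)} dρ(ω)`, `H(ω,x) = (1/n) Σ_i ℓ(ω, x_i)`, has
`(β, 2β²)`-weak interactions: `M(Λ) ≤ β/n` and `J(Λ) ≤ 2β²/n`. -/
theorem free_energy_weak_interactions {Ω 𝒳 : Type*} [MeasurableSpace Ω] [MeasurableSpace 𝒳]
    [Nonempty 𝒳] {n : ℕ} (hn : 0 < n) (ρ : Measure Ω) [IsFiniteMeasure ρ] (hρ : ρ ≠ 0)
    (ℓ : Ω → 𝒳 → ℝ) (hℓmeas : Measurable (Function.uncurry ℓ))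
    (hℓbd : ∀ ω x, ℓ ω x ∈ Set.Icc (0 : ℝ) 1) (β : ℝ) (hβ : 0 < β) :
    Msem (fun x : Fin n → 𝒳 =>
        Real.log (∫ ω, Real.exp (-β * ((1 / (n : ℝ)) * ∑ i, ℓ ω (x i))) ∂ρ)) ≤ β / n ∧
      Jsem (fun x : Fin n → 𝒳 =>
        Real.log (∫ ω, Real.exp (-β * ((1 / (n : ℝ)) * ∑ i, ℓ ω (x i))) ∂ρ)) ≤
        2 * β ^ 2 / n :=
  free_energy_weak_interactions_general ρ hρ ℓ hℓmeas hℓbd β hβ
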